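/- arXiv:1301.1537 — 2 statements merged into one kernel-verified Lean document; each statement's English description precedes it below -/
import Mathlib

section
/- Let Ω ⊆ ℝⁿ, K : Ω × Ω × (0,∞) → ℝ measurable, and suppose there exist constants C, λ, ϱ, r > 0 with: (i) |K(x,y,t)| ≤ C (max(|x−y|, √t))^{-2} for 0 < t < (2r)², and (ii) |K(x,y,t)| ≤ C r^{-2} e^{-λϱ^{-2}(t − 2r²)} for t ≥ 2r². Fix x, y ∈ Ω with 0 < |x−y| ≤ r. Then ∫₀^∞ |K(x,y,t)| dt ≤ C' (1 + ϱ²r^{-2} + log(r/|x−y|)) for a constant C' depending only on C and λ. -/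
/-!
Split `(0, ∞)` at `|x - y|²` and `2r²`. On the first piece the kernel is at most `C / |x - y|²`,
on the second at most `C / t`, which integrates to `C log (2r² / |x - y|²)`, and the exponential
tail integrates to `C ϱ² / (λ r²)`.
-/

open MeasureTheory Set Real

lemma setLIntegral_Ioi_eq_Ioc_add_Ioi {μ : Measure ℝ} {f : ℝ → ENNReal} {a b : ℝ} (hab : a ≤ b) :
    ∫⁻ t in Ioi a, f t ∂μ = (∫⁻ t in Ioc a b, f t ∂μ) + ∫⁻ t in Ioi b, f t ∂μ := by
  rw [← Ioc_union_Ioi_eq_Ioi hab, lintegral_union measurableSet_Ioi Ioc_disjoint_Ioi_same]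

lemma setLIntegral_Ioc_ofReal_le_of_le {f : ℝ → ℝ} {a b M : ℝ} (hab : a ≤ b)
    (hf : ∀ t ∈ Ioc a b, f t ≤ M) :
    ∫⁻ t in Ioc a b, ENNReal.ofReal (f t) ≤ ENNReal.ofReal (M * (b - a)) := by
  calc ∫⁻ t in Ioc a b, ENNReal.ofReal (f t)
      ≤ ∫⁻ _ in Ioc a b, ENNReal.ofReal M :=
        setLIntegral_mono measurable_const fun t ht => ENNReal.ofReal_le_ofReal (hf t ht)
    _ = ENNReal.ofReal (M * (b - a)) := by
        rw [setLIntegral_const, Real.volume_Ioc, ENNReal.ofReal_mul' (sub_nonneg.2 hab)]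

lemma setLIntegral_Ioc_ofReal_div {a b C : ℝ} (ha : 0 < a) (hab : a ≤ b) (hC : 0 ≤ C) :
    ∫⁻ t in Ioc a b, ENNReal.ofReal (C / t) = ENNReal.ofReal (C * log (b / a)) := by
  have hpos : ∀ t ∈ Icc a b, 0 < t := fun t ht => ha.trans_le ht.1
  have hint : IntegrableOn (fun t => C / t) (Ioc a b) :=
    ((continuousOn_const.div continuousOn_id fun t ht => (hpos t ht).ne').integrableOn_Icc).mono_set
      Ioc_subset_Icc_self
  have hnn : 0 ≤ᵐ[volume.restrict (Ioc a b)] fun t => C / t := by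
    filter_upwards [ae_restrict_mem measurableSet_Ioc] with t ht
    exact div_nonneg hC (hpos t (Ioc_subset_Icc_self ht)).le
  rw [← ofReal_integral_eq_lintegral_ofReal hint hnn, ← intervalIntegral.integral_of_le hab]
  simp_rw [div_eq_mul_inv C]
  rw [intervalIntegral.integral_const_mul, integral_inv_of_pos ha (ha.trans_le hab)]

lemma setLIntegral_Ioi_ofReal_mul_exp {b c M : ℝ} (hb : 0 < b) (hM : 0 ≤ M) :
    ∫⁻ t in Ioi c, ENNReal.ofReal (M * exp (-b * (t - c))) = ENNReal.ofReal (M / b) := by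
  have hshift : ∀ t, M * exp (-b * (t - c)) = M * exp (b * c) * exp (-b * t) := fun t => by
    rw [mul_assoc, ← exp_add]; ring_nf
  simp_rw [hshift]
  have hint : IntegrableOn (fun t => M * exp (b * c) * exp (-b * t)) (Ioi c) :=
    (integrableOn_exp_mul_Ioi (neg_lt_zero.2 hb) c).const_mul _
  rw [← ofReal_integral_eq_lintegral_ofReal hint (.of_forall fun t => by positivity),
    integral_const_mul, integral_exp_mul_Ioi (neg_lt_zero.2 hb)]
  congr 1
  rw [neg_mul, exp_neg]
  field_simp

lemma div_max_sq_le_div_sq_left {C d s : ℝ} (hC : 0 ≤ C) (hd : 0 < d) :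
    C / max d s ^ 2 ≤ C / d ^ 2 :=
  div_le_div_of_nonneg_left hC (by positivity) (by gcongr; exact le_max_left _ _)

lemma div_max_sqrt_sq_le_div {C d t : ℝ} (hC : 0 ≤ C) (ht : 0 < t) :
    C / max d √t ^ 2 ≤ C / t := by
  refine div_le_div_of_nonneg_left hC ht ?_
  calc t = √t ^ 2 := (sq_sqrt ht.le).symm
    _ ≤ max d √t ^ 2 := by gcongr; exact le_max_right _ _

lemma add_mul_log_add_div_le {C lam d r Q : ℝ} (hC : 0 ≤ C) (hlam : 0 ≤ lam) (hd : 0 < d)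
    (hdr : d ≤ r) (hQ : 0 ≤ Q) :
    C + C * log (2 * r ^ 2 / d ^ 2) + C * Q / lam ≤
      (2 * C + C * log 2 + C / lam) * (1 + Q + log (r / d)) := by
  have hr : 0 < r := hd.trans_le hdr
  have hL : 0 ≤ log (r / d) := log_nonneg ((one_le_div hd).2 hdr)
  have hlog : log (2 * r ^ 2 / d ^ 2) = log 2 + 2 * log (r / d) := by
    rw [mul_div_assoc, ← div_pow, log_mul two_ne_zero (by positivity), log_pow]
    push_cast; ring
  have hlog2 : 0 ≤ log 2 := log_nonneg one_le_two
  have hClam : 0 ≤ C / lam := div_nonneg hC hlam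
  rw [hlog, show C * Q / lam = C / lam * Q by ring]
  nlinarith [mul_nonneg hC hL, mul_nonneg (mul_nonneg hC hlog2) hL,
    mul_nonneg (mul_nonneg hC hlog2) hQ, mul_nonneg hC hQ, mul_nonneg hClam hL]

/-- Near-diagonal logarithmic bound: if `|K(x,y,t)| ≤ C (max(|x-y|,√t))^{-2}` for small times
and `|K(x,y,t)| ≤ C r^{-2} e^{-λϱ^{-2}(t-2r²)}` for `t ≥ 2r²`, then for `0 < |x-y| ≤ r`,
`∫₀^∞ |K(x,y,t)| dt ≤ C' (1 + ϱ²r^{-2} + log(r/|x-y|))` with `C'` depending only on `C, λ`. -/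
theorem stmt_11 :
    ∀ C lam : ℝ, 0 < C → 0 < lam → ∃ C' : ℝ, 0 < C' ∧
      ∀ (n : ℕ) (Ω : Set (EuclideanSpace ℝ (Fin n)))
        (K : EuclideanSpace ℝ (Fin n) → EuclideanSpace ℝ (Fin n) → ℝ → ℝ)
        (ϱ r : ℝ), 0 < ϱ → 0 < r →
      ∀ x ∈ Ω, ∀ y ∈ Ω, 0 < dist x y → dist x y ≤ r →
      (∀ t : ℝ, 0 < t → t < (2 * r) ^ 2 →
        |K x y t| ≤ C / (max (dist x y) (Real.sqrt t)) ^ 2) →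
      (∀ t : ℝ, 2 * r ^ 2 ≤ t →
        |K x y t| ≤ C / r ^ 2 * Real.exp (-(lam / ϱ ^ 2) * (t - 2 * r ^ 2))) →
      (∫⁻ t in Set.Ioi (0 : ℝ), ENNReal.ofReal |K x y t|) ≤
        ENNReal.ofReal (C' * (1 + ϱ ^ 2 / r ^ 2 + Real.log (r / dist x y))) := by
  intro C lam hC hlam
  refine ⟨2 * C + C * log 2 + C / lam, by positivity, ?_⟩
  intro n Ω K ϱ r hϱ hr x _ y _ hd hdr hshort hlong
  set d := dist x y
  have hd2r : d ^ 2 ≤ 2 * r ^ 2 := by nlinarith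
  have hshort' : ∀ t ∈ Ioc 0 (2 * r ^ 2), |K x y t| ≤ C / max d √t ^ 2 :=
    fun t ht => hshort t ht.1 (by nlinarith [ht.2])
  have hmidpos : 0 ≤ C * log (2 * r ^ 2 / d ^ 2) :=
    mul_nonneg hC.le (log_nonneg ((one_le_div (by positivity)).2 hd2r))
  rw [setLIntegral_Ioi_eq_Ioc_add_Ioi (sq_nonneg d), setLIntegral_Ioi_eq_Ioc_add_Ioi hd2r,
    ← add_assoc]
  calc _ ≤ ENNReal.ofReal C + ENNReal.ofReal (C * log (2 * r ^ 2 / d ^ 2))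
          + ENNReal.ofReal (C / r ^ 2 / (lam / ϱ ^ 2)) := by
        gcongr
        · have hnear : ∀ t ∈ Ioc 0 (d ^ 2), |K x y t| ≤ C / d ^ 2 := fun t ht =>
            (hshort' t ⟨ht.1, ht.2.trans hd2r⟩).trans (div_max_sq_le_div_sq_left hC.le hd)
          refine (setLIntegral_Ioc_ofReal_le_of_le (sq_nonneg d) hnear).trans_eq ?_
          rw [sub_zero, div_mul_cancel₀ _ (by positivity)]
        · rw [← setLIntegral_Ioc_ofReal_div (by positivity) hd2r hC.le]
          refine setLIntegral_mono (by fun_prop) fun t ht => ENNReal.ofReal_le_ofReal ?_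
          have ht0 : 0 < t := (sq_nonneg d).trans_lt ht.1
          exact (hshort' t ⟨ht0, ht.2⟩).trans (div_max_sqrt_sq_le_div hC.le ht0)
        · rw [← setLIntegral_Ioi_ofReal_mul_exp (c := 2 * r ^ 2) (by positivity) (by positivity)]
          exact setLIntegral_mono (by fun_prop) fun t ht => ENNReal.ofReal_le_ofReal (hlong t ht.le)
    _ ≤ _ := by
        rw [← ENNReal.ofReal_add hC.le hmidpos, ← ENNReal.ofReal_add (by positivity)
          (by positivity)]
        refine ENNReal.ofReal_le_ofReal ?_
        convert add_mul_log_add_div_le hC.le hlam.le hd hdr (by positivity : 0 ≤ ϱ ^ 2 / r ^ 2)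
          using 2
        field_simp
end

section
/- Let ϑ > 0 and define κ = 1/(8ϑ). Suppose a nonnegative function N on Ω × Ω (with x ≠ y allowed) satisfies: for every bounded Lipschitz function ψ : ℝⁿ → ℝ with |Dψ| ≤ M a.e. (any M > 0), e^{ψ(x) − ψ(y)} N(x,y) ≤ C ρ^{-n} e^{2ρM + ϑM²τ}, where τ > 0 and ρ = √τ ∧ R_M are fixed. Then N(x,y) ≤ C A ρ^{-n} exp(−κ|x−y|²/τ) for all x ≠ y, where A depends only on ϑ. -/
/-- Optimization-over-`ψ` step of the Davies–Fabes–Stroock argument: if for every `M > 0`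
and every bounded Lipschitz `ψ` with Lipschitz constant `M` one has
`e^{ψ(x)-ψ(y)} N(x,y) ≤ C ρ^{-n} e^{2ρM + ϑM²τ}` (with `τ > 0` and `ρ = √τ ∧ R_M` fixed),
then `N(x,y) ≤ C A ρ^{-n} exp(-κ|x-y|²/τ)` with `κ = 1/(8ϑ)` and `A` depending only on `ϑ`. -/
theorem stmt_14 (ϑ : ℝ) (hϑ : 0 < ϑ) :
    ∃ A : ℝ, 0 < A ∧
      ∀ (n : ℕ) (N : EuclideanSpace ℝ (Fin n) → EuclideanSpace ℝ (Fin n) → ℝ)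
        (C τ ρ RM : ℝ), 0 ≤ C → 0 < τ → ρ = min (Real.sqrt τ) RM → 0 < ρ →
      (∀ x y, 0 ≤ N x y) →
      (∀ M : ℝ, 0 < M → ∀ ψ : EuclideanSpace ℝ (Fin n) → ℝ,
        (∃ K : ℝ, ∀ z, |ψ z| ≤ K) → LipschitzWith (Real.toNNReal M) ψ →
        ∀ x y, Real.exp (ψ x - ψ y) * N x y ≤
          C * ρ ^ (-(n : ℝ)) * Real.exp (2 * ρ * M + ϑ * M ^ 2 * τ)) →
      ∀ x y, x ≠ y →
        N x y ≤ C * A * ρ ^ (-(n : ℝ)) *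
          Real.exp (-(1 / (8 * ϑ)) * dist x y ^ 2 / τ) := by
  refine ⟨Real.exp (2 / ϑ), Real.exp_pos _, ?_⟩
  intro n N C τ ρ RM hC hτ hρdef hρ hN hHyp x y hxy
  set d := dist x y with hd
  have hd0 : 0 < d := dist_pos.2 hxy
  set M : ℝ := d / (2 * ϑ * τ) with hM
  have hM0 : 0 < M := by positivity
  set ψ : EuclideanSpace ℝ (Fin n) → ℝ := fun z => M * min (dist z y) d with hψ
  have hbdd : ∃ K : ℝ, ∀ z, |ψ z| ≤ K := by
    refine ⟨M * d, fun z => ?_⟩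
    rw [abs_of_nonneg (by positivity)]
    exact mul_le_mul_of_nonneg_left (min_le_right _ _) hM0.le
  have hlip : LipschitzWith (Real.toNNReal M) ψ := by
    apply LipschitzWith.of_dist_le_mul
    intro z w
    rw [Real.dist_eq, Real.coe_toNNReal _ hM0.le]
    have h1 : |min (dist z y) d - min (dist w y) d| ≤ |dist z y - dist w y| := by
      simpa using abs_min_sub_min_le_max (dist z y) d (dist w y) d
    have h2 : |dist z y - dist w y| ≤ dist z w := abs_dist_sub_le _ _ _
    calc |ψ z - ψ w| = M * |min (dist z y) d - min (dist w y) d| := by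
          rw [hψ, ← mul_sub, abs_mul, abs_of_nonneg hM0.le]
      _ ≤ M * dist z w := by
          exact mul_le_mul_of_nonneg_left (h1.trans h2) hM0.le
  have key := hHyp M hM0 ψ hbdd hlip x y
  have hψx : ψ x = M * d := by simp [hψ, ← hd]
  have hψy : ψ y = 0 := by simp [hψ, dist_self, hd0.le]
  rw [hψx, hψy, sub_zero] at key
  have hst : Real.sqrt τ ^ 2 = τ := Real.sq_sqrt hτ.le
  have hsp : 0 < Real.sqrt τ := Real.sqrt_pos.2 hτ
  have hρle : ρ ≤ Real.sqrt τ := hρdef ▸ min_le_left _ _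
  have hexp : 2 * ρ * M + ϑ * M ^ 2 * τ - M * d ≤ 2 / ϑ + -(1 / (8 * ϑ)) * d ^ 2 / τ := by
    have h8 : ρ * d ≤ 2 * τ + d ^ 2 / 8 := by
      nlinarith [sq_nonneg (d - 4 * Real.sqrt τ), mul_le_mul_of_nonneg_right hρle hd0.le]
    have hϑ' := hϑ.ne'
    have hτ' := hτ.ne'
    have key2 : (2 * ρ * M + ϑ * M ^ 2 * τ - M * d) * (ϑ * τ) ≤
        (2 / ϑ + -(1 / (8 * ϑ)) * d ^ 2 / τ) * (ϑ * τ) := by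
      have e1 : (2 * ρ * M + ϑ * M ^ 2 * τ - M * d) * (ϑ * τ) = ρ * d - d ^ 2 / 4 := by
        rw [hM]; field_simp; ring
      have e2 : (2 / ϑ + -(1 / (8 * ϑ)) * d ^ 2 / τ) * (ϑ * τ) = 2 * τ - d ^ 2 / 8 := by
        field_simp; ring
      rw [e1, e2]; linarith
    exact le_of_mul_le_mul_right key2 (by positivity)
  have hNle : N x y ≤ C * ρ ^ (-(n : ℝ)) *
      Real.exp (2 * ρ * M + ϑ * M ^ 2 * τ - M * d) := by
    have := mul_le_mul_of_nonneg_right key (Real.exp_pos (-(M * d))).le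
    rw [mul_assoc (C * ρ ^ (-(n : ℝ))), ← Real.exp_add] at this
    calc N x y = Real.exp (M * d) * N x y * Real.exp (-(M * d)) := by
          rw [mul_comm (Real.exp (M * d)), mul_assoc, ← Real.exp_add]; simp
      _ ≤ _ := by simpa [sub_eq_add_neg] using this
  refine hNle.trans ?_
  have hA : Real.exp (2 * ρ * M + ϑ * M ^ 2 * τ - M * d) ≤
      Real.exp (2 / ϑ) * Real.exp (-(1 / (8 * ϑ)) * d ^ 2 / τ) := by
    rw [← Real.exp_add]
    exact Real.exp_le_exp.2 hexp
  calc C * ρ ^ (-(n : ℝ)) * Real.exp (2 * ρ * M + ϑ * M ^ 2 * τ - M * d)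
      ≤ C * ρ ^ (-(n : ℝ)) * (Real.exp (2 / ϑ) * Real.exp (-(1 / (8 * ϑ)) * d ^ 2 / τ)) := by
        apply mul_le_mul_of_nonneg_left hA (by positivity)
    _ = C * Real.exp (2 / ϑ) * ρ ^ (-(n : ℝ)) * Real.exp (-(1 / (8 * ϑ)) * d ^ 2 / τ) := by
        ring
end
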